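/- Let A be a maximal monotone operator on a real Hilbert space H with p ∈ A⁻¹(0). Let β_n > 0, u_n a bounded sequence in H, α_n ∈ ℝ with |α_n| ≤ c for all n, where c < 1, and (α_n e_n) bounded. Then for every x₀ ∈ H the sequence defined by x_{n+1} = (I + β_n A)⁻¹(u_n + α_n(x_n + e_n)) is bounded. -/

import Mathlib

open scoped RealInnerProductSpace
open Filter

variable {H : Type*} [NormedAddCommGroup H] [InnerProductSpace ℝ H] [CompleteSpace H]

/-- A (possibly set-valued) operator `A : H → Set H` is monotone. -/
def IsMonotoneOp (A : H → Set H) : Prop :=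
  ∀ x₁ y₁ x₂ y₂, y₁ ∈ A x₁ → y₂ ∈ A x₂ → 0 ≤ ⟪x₁ - x₂, y₁ - y₂⟫

/-- `A` is maximal monotone: it is monotone and any pair `[x, y]` monotonically
related to the whole graph of `A` already belongs to the graph of `A`. -/
def IsMaximalMonotone (A : H → Set H) : Prop :=
  IsMonotoneOp A ∧ ∀ x y, (∀ v w, w ∈ A v → 0 ≤ ⟪v - x, w - y⟫) → y ∈ A x

/-- `J` is the resolvent `(I + βA)⁻¹` of `A`: for every `y`, `J y` satisfies
`(y - J y)/β ∈ A (J y)`, i.e. `y ∈ (I + βA)(J y)`. -/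
def IsResolvent (A : H → Set H) (β : ℝ) (J : H → H) : Prop :=
  ∀ y, β⁻¹ • (y - J y) ∈ A (J y)

/-- `p` is the metric projection of `u` onto the set `F`. -/
def IsProjection (F : Set H) (u p : H) : Prop :=
  p ∈ F ∧ ∀ q ∈ F, ‖u - p‖ ≤ ‖u - q‖

/-! The resolvent moves no point farther from a zero `p` of `A`, so
`‖x (n+1)‖ ≤ K + c ‖x n‖` with `K = sup ‖u‖ + sup ‖α e‖ + 2 ‖p‖`; a sequence obeying such a
recursion with `0 ≤ c < 1` never exceeds `max ‖x 0‖ (K / (1 - c))`. -/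

section Resolvent

variable {E : Type*} [NormedAddCommGroup E] [InnerProductSpace ℝ E]
  {A : E → Set E} {β : ℝ} {J : E → E} {p : E}

theorem IsResolvent.norm_sub_le (hA : IsMonotoneOp A) (hβ : 0 < β) (hJ : IsResolvent A β J)
    (hp : (0 : E) ∈ A p) (y : E) : ‖J y - p‖ ≤ ‖y - p‖ := by
  have hmono : 0 ≤ β⁻¹ * ⟪J y - p, y - J y⟫ := by
    simpa [real_inner_smul_right] using hA _ _ _ _ (hJ y) hp
  have hinner : 0 ≤ ⟪J y - p, y - J y⟫ :=
    nonneg_of_mul_nonneg_right hmono (inv_pos.mpr hβ)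
  have hsq : ‖J y - p‖ ^ 2 ≤ ‖J y - p‖ * ‖y - p‖ :=
    calc ‖J y - p‖ ^ 2 ≤ ⟪J y - p, y - J y⟫ + ⟪J y - p, J y - p⟫ := by
          rw [real_inner_self_eq_norm_sq]; linarith
      _ = ⟪J y - p, y - p⟫ := by rw [← inner_add_right, sub_add_sub_cancel]
      _ ≤ ‖J y - p‖ * ‖y - p‖ := real_inner_le_norm _ _
  nlinarith [norm_nonneg (J y - p), norm_nonneg (y - p)]

theorem IsResolvent.norm_le (hA : IsMonotoneOp A) (hβ : 0 < β) (hJ : IsResolvent A β J)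
    (hp : (0 : E) ∈ A p) (y : E) : ‖J y‖ ≤ ‖y‖ + 2 * ‖p‖ :=
  calc ‖J y‖ ≤ ‖J y - p‖ + ‖p‖ := norm_le_norm_sub_add _ _
    _ ≤ ‖y - p‖ + ‖p‖ := by gcongr; exact hJ.norm_sub_le hA hβ hp y
    _ ≤ ‖y‖ + 2 * ‖p‖ := by linarith [_root_.norm_sub_le y p]

end Resolvent

theorem le_max_of_succ_le_add_mul {a : ℕ → ℝ} {K c : ℝ} (hc₀ : 0 ≤ c) (hc₁ : c < 1)
    (h : ∀ n, a (n + 1) ≤ K + c * a n) (n : ℕ) : a n ≤ max (a 0) (K / (1 - c)) := by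
  set D := max (a 0) (K / (1 - c))
  have hKD : K ≤ (1 - c) * D := by
    rw [← div_le_iff₀' (sub_pos.mpr hc₁)]
    exact le_max_right _ _
  induction n with
  | zero => exact le_max_left _ _
  | succ n ih => nlinarith [h n]

/-- If `F = A⁻¹(0)` is nonempty, `(u_n)` and `(α_n e_n)` are bounded and `|α_n| ≤ c < 1`,
then the sequence generated by the algorithm is bounded. -/
theorem stmt_2 (A : H → Set H) (hA : IsMaximalMonotone A)
    (p₀ : H) (hp₀ : (0 : H) ∈ A p₀)
    (β : ℕ → ℝ) (hβpos : ∀ n, 0 < β n)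
    (useq : ℕ → H) (hub : ∃ M, ∀ n, ‖useq n‖ ≤ M)
    (α : ℕ → ℝ) (c : ℝ) (hc : c < 1) (hαc : ∀ n, |α n| ≤ c)
    (e : ℕ → H) (hαe : ∃ M, ∀ n, ‖α n • e n‖ ≤ M)
    (J : ℕ → H → H) (hJ : ∀ n, IsResolvent A (β n) (J n))
    (x : ℕ → H) (hx : ∀ n, x (n + 1) = J n (useq n + α n • (x n + e n))) :
    ∃ M, ∀ n, ‖x n‖ ≤ M := by
  obtain ⟨Mu, hMu⟩ := hub
  obtain ⟨Me, hMe⟩ := hαe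
  have hc₀ : 0 ≤ c := (abs_nonneg _).trans (hαc 0)
  have hstep : ∀ n, ‖x (n + 1)‖ ≤ (Mu + Me + 2 * ‖p₀‖) + c * ‖x n‖ := by
    intro n
    have hy : ‖useq n + α n • (x n + e n)‖ ≤ Mu + Me + c * ‖x n‖ :=
      calc ‖useq n + α n • (x n + e n)‖ ≤ ‖useq n‖ + ‖α n • e n‖ + ‖α n • x n‖ := by
            rw [smul_add, add_comm (α n • x n), ← add_assoc]
            exact norm_add₃_le
        _ ≤ Mu + Me + c * ‖x n‖ := by
            rw [norm_smul (α n) (x n), Real.norm_eq_abs]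
            gcongr
            exacts [hMu n, hMe n, hαc n]
    rw [hx n]
    linarith [(hJ n).norm_le hA.1 (hβpos n) hp₀ (useq n + α n • (x n + e n))]
  exact ⟨_, le_max_of_succ_le_add_mul hc₀ hc hstep⟩
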